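/- For every nonnegative integer n, Σ_{m=0}^{n} S2_C(n, m) · CC_m equals 1/L_j if n = r^j − 1 for some nonnegative integer j, and equals 0 otherwise; here S2_C denotes the Stirling-Carlitz numbers of the second kind and CC_m the Cauchy-Carlitz numbers. -/

import Mathlib

/-!
Put `A(z) = Σ_m CC_m z^m / Π(m) = z / log_C(z)`. By the definition of `S2_C` the sum equals
`Π(n)` times the `z^n`-coefficient of `A(e_C(z)) = e_C(z) / log_C(e_C(z)) = e_C(z) / z`, i.e.
`Π(n) / D_j` if `n + 1 = r^j` and `0` otherwise; and `L_j Π(r^j - 1) = D_j` since all base-`r`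
digits of `r^j - 1` equal `r - 1`.

The identity `log_C(e_C(z)) = z` holds because both series are `r`-linearized, `Σ_i a_i z^{r^i}`:
raising to the power `r^i` is additive in characteristic `p`, so the composite is again linearized,
with coefficients `Σ_{i+j=k} a_i b_j^{r^i}`; for `log_C ∘ e_C` these are `1, 0, 0, …`.
-/

open scoped Classical
open PowerSeries Finset

noncomputable section

variable (F : Type) [Field F] [Fintype F]

/-- The rational function field `K = 𝔽_r(T)`. -/
abbrev K : Type := RatFunc F

/-- `r`, the cardinality of the finite field of constants. -/
def rr : ℕ := Fintype.card F

/-- The variable `T` of the rational function field. -/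
def Tv : K F := RatFunc.X

/-- `[i] = T^{r^i} - T`. -/
def br (i : ℕ) : K F := Tv F ^ (rr F) ^ i - Tv F

/-- `D_0 = 1`, `D_i = [i] · D_{i-1}^r`. -/
def D : ℕ → K F
  | 0 => 1
  | i + 1 => br F (i + 1) * D i ^ rr F

/-- `L_0 = 1`, `L_i = [i] · L_{i-1}`. -/
def L : ℕ → K F
  | 0 => 1
  | i + 1 => br F (i + 1) * L i

/-- The Carlitz factorial `Π(n) = ∏_j D_j^{c_j}`, where `c_j = n / r^j % r` are the
base-`r` digits of `n` (all digits with index `> n` vanish since `r ≥ 2`). -/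
def Cf (n : ℕ) : K F := ∏ j ∈ Finset.range (n + 1), D F j ^ (n / (rr F) ^ j % rr F)

/-- The Carlitz logarithm `log_C(z) = Σ_{i ≥ 0} (-1)^i z^{r^i} / L_i`: the coefficient of
`z^m` is `(-1)^i / L_i` if `m = r^i` and `0` otherwise (note `i ≤ r^i = m` since `r ≥ 2`). -/
def logC : PowerSeries (K F) :=
  PowerSeries.mk fun m =>
    ∑ i ∈ Finset.range (m + 1), if m = (rr F) ^ i then (-1 : K F) ^ i / L F i else 0

/-- The Carlitz exponential `e_C(z) = Σ_{i ≥ 0} z^{r^i} / D_i`. -/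
def eC : PowerSeries (K F) :=
  PowerSeries.mk fun m =>
    ∑ i ∈ Finset.range (m + 1), if m = (rr F) ^ i then 1 / D F i else 0

/-- The power series `log_C(z)/z`. -/
def logCdivZ : PowerSeries (K F) :=
  PowerSeries.mk fun n => PowerSeries.coeff (R := K F) (n + 1) (logC F)

/-- The power series `e_C(z)/z`. -/
def eCdivZ : PowerSeries (K F) :=
  PowerSeries.mk fun n => PowerSeries.coeff (R := K F) (n + 1) (eC F)

namespace PowerSeries

variable {R : Type*} [CommRing R]

theorem coeff_pow_expChar_pow (p : ℕ) [ExpChar R p] (f : R⟦X⟧) (k n : ℕ) :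
    coeff n (f ^ p ^ k) = if p ^ k ∣ n then coeff (n / p ^ k) f ^ p ^ k else 0 := by
  have hp : p ≠ 0 := expChar_ne_zero R p
  rw [← MvPowerSeries.map_iterateFrobenius_expand p hp f k]
  change coeff n (map (iterateFrobenius R p k) (expand (p ^ k) (pow_ne_zero k hp) f)) = _
  rw [coeff_map, coeff_expand]
  split_ifs <;> simp [iterateFrobenius_def, hp]

theorem coeff_subst_eq_sum_range {g : R⟦X⟧} (hg : constantCoeff g = 0) (f : R⟦X⟧)
    (n : ℕ) :
    coeff n (subst g f) = ∑ d ∈ range (n + 1), coeff d f * coeff n (g ^ d) := by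
  rw [coeff_subst' (HasSubst.of_constantCoeff_zero' hg),
    finsum_eq_sum_of_support_subset (s := range (n + 1))]
  · simp only [smul_eq_mul]
  · intro d hd
    by_contra hdn
    have hX : (X : R⟦X⟧) ^ d ∣ g ^ d := pow_dvd_pow_of_dvd (X_dvd_iff.2 hg) d
    exact hd (by simp [X_pow_dvd_iff.1 hX n (by simpa using hdn)])

end PowerSeries

lemma Nat.pow_add_sub_one_div_pow {b : ℕ} (hb : 0 < b) (l t : ℕ) :
    (b ^ (l + t) - 1) / b ^ l = b ^ t - 1 := by
  have hx : 0 < b ^ l := pow_pos hb l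
  have hy : 0 < b ^ t := pow_pos hb t
  have hyx : 0 < b ^ t * b ^ l := Nat.mul_pos hy hx
  rw [add_comm, pow_add]
  apply Nat.div_eq_of_lt_le
  · rw [Nat.sub_one_mul]; omega
  · rw [Nat.sub_one_add_one hy.ne']; omega

lemma Nat.pow_succ_sub_one_mod_self {b : ℕ} (hb : 0 < b) (t : ℕ) :
    (b ^ (t + 1) - 1) % b = b - 1 := by
  have hbt : b ≤ b ^ t * b := Nat.le_mul_of_pos_left b (pow_pos hb t)
  have hsplit : b ^ (t + 1) - 1 = (b ^ t - 1) * b + (b - 1) := by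
    rw [pow_succ, Nat.sub_one_mul]; omega
  rw [hsplit, Nat.mul_add_mod', Nat.mod_eq_of_lt (by omega)]

lemma Nat.pow_sub_one_div_pow_mod_self {b : ℕ} (hb : 0 < b) (j l : ℕ) :
    (b ^ j - 1) / b ^ l % b = if l < j then b - 1 else 0 := by
  split_ifs with hlj
  · obtain ⟨t, rfl⟩ : ∃ t, j = l + (t + 1) := ⟨j - l - 1, by omega⟩
    rw [Nat.pow_add_sub_one_div_pow hb, Nat.pow_succ_sub_one_mod_self hb]
  · have : b ^ j ≤ b ^ l := Nat.pow_le_pow_right hb (by omega)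
    have : 0 < b ^ l := pow_pos hb l
    rw [Nat.div_eq_of_lt (by omega), Nat.zero_mod]

lemma two_le_rr : 2 ≤ rr F := Fintype.one_lt_card

lemma rr_pos : 0 < rr F := Fintype.card_pos

lemma exists_expChar_rr_eq_pow : ∃ p s : ℕ, ExpChar (K F) p ∧ rr F = p ^ s := by
  obtain ⟨p, _, s, hp, hcard⟩ := FiniteField.card' F
  have : Fact p.Prime := ⟨hp⟩
  exact ⟨p, s, inferInstance, hcard⟩

lemma coeff_pow_rr_pow (f : PowerSeries (K F)) (i n : ℕ) :
    coeff n (f ^ rr F ^ i) = if rr F ^ i ∣ n then coeff (n / rr F ^ i) f ^ rr F ^ i else 0 := by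
  obtain ⟨p, s, _, hr⟩ := exists_expChar_rr_eq_pow F
  rw [hr, ← pow_mul]
  exact coeff_pow_expChar_pow p f (s * i) n

lemma sub_pow_rr_pow (x y : K F) (i : ℕ) :
    (x - y) ^ rr F ^ i = x ^ rr F ^ i - y ^ rr F ^ i := by
  obtain ⟨p, s, _, hr⟩ := exists_expChar_rr_eq_pow F
  rw [hr, ← pow_mul]
  exact sub_pow_expChar_pow x y (s * i)

lemma br_zero : br F 0 = 0 := by simp [br]

lemma br_ne_zero {i : ℕ} (hi : i ≠ 0) : br F i ≠ 0 := by
  have h1 : 1 < rr F ^ i := Nat.one_lt_pow hi (two_le_rr F)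
  have hX : br F i = algebraMap (Polynomial F) (K F) (Polynomial.X ^ rr F ^ i - Polynomial.X) := by
    simp [br, Tv]
  rw [hX]
  exact (map_ne_zero_iff _ (IsFractionRing.injective (Polynomial F) (K F))).2
    (FiniteField.X_pow_card_sub_X_ne_zero F h1)

lemma br_add (i j : ℕ) : br F (i + j) = br F i + br F j ^ rr F ^ i := by
  rw [br, br, br, sub_pow_rr_pow, ← pow_mul, ← pow_add, add_comm j]
  ring

lemma D_ne_zero (i : ℕ) : D F i ≠ 0 := by
  induction i with
  | zero => simp [D]
  | succ i ih => exact mul_ne_zero (br_ne_zero F i.succ_ne_zero) (pow_ne_zero _ ih)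

lemma L_ne_zero (i : ℕ) : L F i ≠ 0 := by
  induction i with
  | zero => simp [L]
  | succ i ih => exact mul_ne_zero (br_ne_zero F i.succ_ne_zero) ih

lemma Cf_ne_zero (n : ℕ) : Cf F n ≠ 0 :=
  prod_ne_zero_iff.2 fun j _ => pow_ne_zero _ (D_ne_zero F j)

lemma br_mul_neg_one_pow_div_L (i : ℕ) :
    br F (i + 1) * ((-1) ^ (i + 1) / L F (i + 1)) = -((-1) ^ i / L F i) := by
  have := br_ne_zero F i.succ_ne_zero
  have := L_ne_zero F i
  rw [L]
  field_simp
  ring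

lemma br_pow_mul_one_div_D_pow (j q : ℕ) :
    br F (j + 1) ^ q * (1 / D F (j + 1)) ^ q = (1 / D F j) ^ (rr F * q) := by
  have := br_ne_zero F j.succ_ne_zero
  have := D_ne_zero F j
  rw [← mul_pow, pow_mul, D]
  congr 1
  rw [div_pow, one_pow]
  field_simp

/-- Multiplying by `[k] = [i] + [j]^{r^i}` (for `i + j = k`) makes the sum telescope. -/
lemma sum_antidiagonal_neg_one_pow_div_L_mul_one_div_D_pow {k : ℕ} (hk : k ≠ 0) :
    ∑ ij ∈ antidiagonal k, (-1) ^ ij.1 / L F ij.1 * (1 / D F ij.2) ^ rr F ^ ij.1 = 0 := by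
  obtain ⟨m, rfl⟩ := Nat.exists_eq_add_one_of_ne_zero hk
  set u : ℕ × ℕ → K F := fun ij => (-1) ^ ij.1 / L F ij.1 * (1 / D F ij.2) ^ rr F ^ ij.1
  set w : ℕ × ℕ → K F := fun ij =>
    (-1) ^ ij.1 / L F ij.1 * (1 / D F ij.2) ^ rr F ^ (ij.1 + 1)
  have hsplit : br F (m + 1) * ∑ ij ∈ antidiagonal (m + 1), u ij
      = ∑ ij ∈ antidiagonal (m + 1), br F ij.1 * u ij
        + ∑ ij ∈ antidiagonal (m + 1), br F ij.2 ^ rr F ^ ij.1 * u ij := by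
    rw [mul_sum, ← sum_add_distrib]
    refine sum_congr rfl fun ij hij => ?_
    rw [← mem_antidiagonal.1 hij, br_add, add_mul]
  have hleft :
      ∑ ij ∈ antidiagonal (m + 1), br F ij.1 * u ij = -∑ ij ∈ antidiagonal m, w ij := by
    rw [Nat.sum_antidiagonal_succ, ← sum_neg_distrib]
    simp only [u, w, br_zero, zero_mul, zero_add]
    refine sum_congr rfl fun ij _ => ?_
    rw [← mul_assoc, br_mul_neg_one_pow_div_L, neg_mul]
  have hright : ∑ ij ∈ antidiagonal (m + 1), br F ij.2 ^ rr F ^ ij.1 * u ij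
      = ∑ ij ∈ antidiagonal m, w ij := by
    rw [Nat.sum_antidiagonal_succ']
    simp only [u, w, br_zero, zero_pow (pow_ne_zero _ (rr_pos F).ne'), zero_mul, zero_add]
    refine sum_congr rfl fun ij _ => ?_
    rw [mul_left_comm, br_pow_mul_one_div_D_pow, pow_succ']
  refine (mul_eq_zero.1 ?_).resolve_left (br_ne_zero F m.succ_ne_zero)
  rw [hsplit, hleft, hright, neg_add_cancel]

/-- The `𝔽_r`-linear power series `Σ_i a_i z^{r^i}`. -/
def linearized (a : ℕ → K F) : PowerSeries (K F) :=
  mk fun m => ∑ i ∈ range (m + 1), if m = rr F ^ i then a i else 0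

lemma logC_eq_linearized : logC F = linearized F fun i => (-1) ^ i / L F i := rfl

lemma eC_eq_linearized : eC F = linearized F fun i => 1 / D F i := rfl

lemma coeff_linearized_rr_pow (a : ℕ → K F) (i : ℕ) :
    coeff (rr F ^ i) (linearized F a) = a i := by
  rw [linearized, coeff_mk, sum_eq_single_of_mem i
    (mem_range.2 (Nat.lt_succ_of_lt (Nat.lt_pow_self (two_le_rr F)))), if_pos rfl]
  exact fun j _ hji => if_neg fun h => hji (Nat.pow_right_injective (two_le_rr F) h.symm)

lemma coeff_linearized_of_forall_ne (a : ℕ → K F) {m : ℕ} (hm : ∀ i, m ≠ rr F ^ i) :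
    coeff m (linearized F a) = 0 := by
  rw [linearized, coeff_mk]
  exact sum_eq_zero fun i _ => if_neg (hm i)

lemma constantCoeff_linearized (a : ℕ → K F) : constantCoeff (linearized F a) = 0 := by
  rw [← coeff_zero_eq_constantCoeff_apply]
  exact coeff_linearized_of_forall_ne F a fun i => (pow_ne_zero i (rr_pos F).ne').symm

lemma constantCoeff_eC : constantCoeff (eC F) = 0 := constantCoeff_linearized F _

lemma linearized_pow_rr_pow (b : ℕ → K F) (i : ℕ) :
    linearized F b ^ rr F ^ i
      = linearized F fun j => if i ≤ j then b (j - i) ^ rr F ^ i else 0 := by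
  ext n
  rw [coeff_pow_rr_pow]
  by_cases hn : ∃ k, n = rr F ^ k
  · obtain ⟨k, rfl⟩ := hn
    rw [coeff_linearized_rr_pow]
    by_cases hik : i ≤ k
    · rw [if_pos (pow_dvd_pow _ hik), if_pos hik, Nat.pow_div hik (rr_pos F),
        coeff_linearized_rr_pow]
    · rw [if_neg (mt (Nat.pow_dvd_pow_iff_le_right (two_le_rr F)).1 hik), if_neg hik]
  · simp only [not_exists] at hn
    rw [coeff_linearized_of_forall_ne F _ hn]
    split_ifs with hdvd
    · rw [coeff_linearized_of_forall_ne F b, zero_pow (pow_ne_zero _ (rr_pos F).ne')]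
      intro j hj
      exact hn (i + j) (by rw [← Nat.div_mul_cancel hdvd, hj, pow_add, mul_comm])
    · rfl

lemma subst_linearized (a b : ℕ → K F) :
    subst (linearized F b) (linearized F a)
      = linearized F fun k => ∑ ij ∈ antidiagonal k, a ij.1 * b ij.2 ^ rr F ^ ij.1 := by
  ext n
  have hinj : Function.Injective (rr F ^ ·) := Nat.pow_right_injective (two_le_rr F)
  rw [coeff_subst' (HasSubst.of_constantCoeff_zero' (constantCoeff_linearized F b)),
    ← finsum_mem_univ, finsum_mem_inter_support_eq' _ _ (Set.range (rr F ^ ·)),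
    finsum_mem_range hinj]
  · simp only [coeff_linearized_rr_pow, linearized_pow_rr_pow, smul_eq_mul]
    by_cases hn : ∃ k, n = rr F ^ k
    · obtain ⟨k, rfl⟩ := hn
      simp only [coeff_linearized_rr_pow]
      rw [finsum_eq_sum_of_support_subset (s := range (k + 1)),
        Nat.sum_antidiagonal_eq_sum_range_succ (fun i j => a i * b j ^ rr F ^ i)]
      · refine sum_congr rfl fun i hi => ?_
        rw [if_pos (Nat.lt_succ_iff.1 (mem_range.1 hi))]
      · intro i hi
        by_contra hik
        simp_all
    · simp only [not_exists] at hn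
      simp only [coeff_linearized_of_forall_ne F _ hn, mul_zero, finsum_zero]
  · intro d hd
    simp only [Set.mem_univ, Set.mem_range, true_iff]
    by_contra h
    simp only [not_exists] at h
    exact hd (by simp [coeff_linearized_of_forall_ne F a fun i hi => h i hi.symm])

lemma linearized_eq_X {c : ℕ → K F} (h0 : c 0 = 1) (hc : ∀ k, k ≠ 0 → c k = 0) :
    linearized F c = X := by
  ext n
  rw [coeff_X]
  by_cases hn : ∃ k, n = rr F ^ k
  · obtain ⟨k, rfl⟩ := hn
    rw [coeff_linearized_rr_pow]
    rcases eq_or_ne k 0 with rfl | hk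
    · simp [h0]
    · rw [hc k hk, if_neg (Nat.one_lt_pow hk (two_le_rr F)).ne']
  · simp only [not_exists] at hn
    rw [coeff_linearized_of_forall_ne F c hn, if_neg fun h => hn 0 (by simp [h])]

lemma subst_eC_logC : subst (eC F) (logC F) = X := by
  rw [logC_eq_linearized, eC_eq_linearized]
  refine (subst_linearized F _ _).trans (linearized_eq_X F ?_ fun k hk => ?_)
  · simp [L, D]
  · exact sum_antidiagonal_neg_one_pow_div_L_mul_one_div_D_pow F hk

lemma linearized_eq_X_mul_shift (a : ℕ → K F) :
    linearized F a = X * PowerSeries.mk fun n => coeff (n + 1) (linearized F a) := by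
  simpa [constantCoeff_linearized] using eq_X_mul_shift_add_const (linearized F a)

lemma subst_eC_eq_eCdivZ {A : PowerSeries (K F)} (hA : A * logCdivZ F = 1) :
    subst (eC F) A = eCdivZ F := by
  have he : HasSubst (eC F) := HasSubst.of_constantCoeff_zero' (constantCoeff_eC F)
  have hlog : logC F = X * logCdivZ F := linearized_eq_X_mul_shift F _
  have hexp : eC F = X * eCdivZ F := linearized_eq_X_mul_shift F _
  have hinvA : subst (eC F) A * subst (eC F) (logCdivZ F) = 1 := by
    rw [← subst_mul he, hA, ← coe_substAlgHom he, map_one]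
  have hinvE : subst (eC F) (logCdivZ F) * eCdivZ F = 1 := by
    apply mul_left_cancel₀ (X_ne_zero (R := K F))
    calc X * (subst (eC F) (logCdivZ F) * eCdivZ F) = subst (eC F) (logC F) := by
          rw [hlog, subst_mul he, subst_X he, hexp]
          ring
      _ = X * 1 := by rw [subst_eC_logC, mul_one]
  exact left_inv_eq_right_inv hinvA hinvE

lemma sum_mul_eq_Cf_mul_coeff_subst_eC (CC : ℕ → K F) (S2C : ℕ → ℕ → K F) (n : ℕ)
    (hS2C : ∀ k, coeff n (eC F ^ k) / Cf F k = S2C n k / Cf F n) :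
    ∑ m ∈ range (n + 1), S2C n m * CC m
      = Cf F n * coeff n (subst (eC F) (mk fun m => CC m / Cf F m)) := by
  rw [coeff_subst_eq_sum_range (constantCoeff_eC F), mul_sum]
  refine sum_congr rfl fun m _ => ?_
  rw [(div_eq_iff (Cf_ne_zero F n)).1 (hS2C m).symm, coeff_mk]
  ring

lemma Cf_rr_pow_sub_one (j : ℕ) :
    Cf F (rr F ^ j - 1) = ∏ l ∈ range j, D F l ^ (rr F - 1) := by
  have hj : j < rr F ^ j := Nat.lt_pow_self (two_le_rr F)
  rw [Cf, ← prod_subset (range_subset_range.2 (show j ≤ rr F ^ j - 1 + 1 by omega))]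
  · exact prod_congr rfl fun l hl => by
      rw [Nat.pow_sub_one_div_pow_mod_self (rr_pos F), if_pos (mem_range.1 hl)]
  · intro l _ hl
    rw [Nat.pow_sub_one_div_pow_mod_self (rr_pos F), if_neg (by simpa using hl), pow_zero]

lemma L_mul_Cf_rr_pow_sub_one (j : ℕ) : L F j * Cf F (rr F ^ j - 1) = D F j := by
  rw [Cf_rr_pow_sub_one]
  induction j with
  | zero => simp [L, D]
  | succ j ih =>
    rw [prod_range_succ, L, D, mul_assoc, ← mul_assoc (L F j), ih, ← pow_succ',
      Nat.sub_add_cancel (rr_pos F)]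

/-- Theorem: `Σ_{m=0}^n S2_C(n, m) · CC_m` equals `1/L_j` if `n = r^j - 1` for some `j ≥ 0`,
and equals `0` otherwise. -/
theorem sum_stirlingCarlitzSecond_mul_cauchyCarlitz
    (CC : ℕ → K F) (S2C : ℕ → ℕ → K F)
    (hCC : (PowerSeries.mk fun n => CC n / Cf F n) * logCdivZ F = 1)
    (hS2C : ∀ n k : ℕ,
      PowerSeries.coeff (R := K F) n (eC F ^ k) / Cf F k = S2C n k / Cf F n)
    (n : ℕ) :
    (∀ j : ℕ, n = (rr F) ^ j - 1 →
        ∑ m ∈ Finset.range (n + 1), S2C n m * CC m = 1 / L F j) ∧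
      ((∀ j : ℕ, n ≠ (rr F) ^ j - 1) →
        ∑ m ∈ Finset.range (n + 1), S2C n m * CC m = 0) := by
  have hsum : ∑ m ∈ range (n + 1), S2C n m * CC m = Cf F n * coeff (n + 1) (eC F) := by
    rw [sum_mul_eq_Cf_mul_coeff_subst_eC F CC S2C n (hS2C n), subst_eC_eq_eCdivZ F hCC, eCdivZ,
      coeff_mk]
  have hpos (j : ℕ) : 0 < rr F ^ j := pow_pos (rr_pos F) j
  refine ⟨fun j hj => ?_, fun hn => ?_⟩
  · have hL := L_ne_zero F j
    have hC := Cf_ne_zero F n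
    rw [hsum, show n + 1 = rr F ^ j by have := hpos j; omega, eC_eq_linearized,
      coeff_linearized_rr_pow, ← L_mul_Cf_rr_pow_sub_one F j, ← hj]
    field_simp
  · rw [hsum, eC_eq_linearized,
      coeff_linearized_of_forall_ne F _ fun j hj => hn j (by have := hpos j; omega), mul_zero]
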